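/- Theorem 4.9 (explicit construction of the extension with prescribed real eigenvalue). Let λ ∈ ℝ. Define g_λ : [0,2π] → ℂ by g_λ(x) = −2i · exp( −i ∫ₓ^{2π} conj(V(t)) dt + iλ(2π − x) ), and set ρ_λ := (i/2) g_λ(0) and k_λ(x) := Im V(x) · g_λ(x). Then: (a) g_λ(2π) = −2i and g_λ(0) = ρ_λ g_λ(2π); (b) g_λ is absolutely continuous with some derivative g_λ′ ∈ L¹(0,2π) and i g_λ′(x) + V(x) g_λ(x) + g_λ(2π) k_λ(x) = λ g_λ(x) for almost every x ∈ (0,2π); (c) 1 − |ρ_λ|² = (1/2) ∫₀^{2π} Im V(t) · |g_λ(t)|² dt. -/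

import Mathlib

open MeasureTheory Real Complex

/-!
With `u = i·conj V − iλ` one has `g_λ(x) = g_λ(0) exp(∫₀ˣ u)`, so `g_λ` is absolutely continuous
with `g_λ' = u g_λ`; this is the eigenvalue equation because `i u + V − 2i Im V = λ`. In the same
way `(|g_λ|²)' = 2 Re u |g_λ|² = 2 Im V |g_λ|²`, and integrating over `[0, 2π]` with
`|g_λ(2π)| = 2`, `|g_λ(0)| = 2|ρ_λ|` gives (c). The chain rule
`exp(∫ₐˣ u) = 1 + ∫ₐˣ u exp(∫ₐᵗ u)` for merely integrable `u` holds because both sides are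
absolutely continuous with the same derivative almost everywhere.
-/

/-- `f : [0,2π] → ℂ` is absolutely continuous with derivative `f'`:
`f' ∈ L¹(0,2π)` and `f x = f 0 + ∫₀ˣ f'` for all `x ∈ [0,2π]`. -/
def IsACWithDeriv (f f' : ℝ → ℂ) : Prop :=
  MeasureTheory.IntegrableOn f' (Set.Ioc 0 (2 * Real.pi)) ∧
    ∀ x ∈ Set.Icc (0:ℝ) (2 * Real.pi), f x = f 0 + ∫ t in (0:ℝ)..x, f' t

open Set Filter

theorem AbsolutelyContinuousOnInterval.of_dist_le_mul {X Y : Type*} [PseudoMetricSpace X]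
    [PseudoMetricSpace Y] {f : ℝ → X} {g : ℝ → Y} {a b : ℝ}
    (hf : AbsolutelyContinuousOnInterval f a b) (K : ℝ)
    (h : ∀ x ∈ uIcc a b, ∀ y ∈ uIcc a b, dist (g x) (g y) ≤ K * dist (f x) (f y)) :
    AbsolutelyContinuousOnInterval g a b := by
  unfold AbsolutelyContinuousOnInterval at hf ⊢
  refine squeeze_zero' (Eventually.of_forall fun _ => Finset.sum_nonneg fun _ _ => dist_nonneg)
    ?_ (by simpa using hf.const_mul K)
  rw [eventually_inf_principal]
  filter_upwards with E hE
  rw [Finset.mul_sum]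
  exact Finset.sum_le_sum fun i hi => h _ (hE.1 i hi).1 _ (hE.1 i hi).2

theorem LocallyLipschitz.comp_absolutelyContinuousOnInterval {X Y : Type*}
    [SeminormedAddCommGroup X] [PseudoMetricSpace Y] {f : ℝ → X} {g : X → Y} {a b : ℝ}
    (hg : LocallyLipschitz g) (hf : AbsolutelyContinuousOnInterval f a b) :
    AbsolutelyContinuousOnInterval (g ∘ f) a b := by
  obtain ⟨K, hK⟩ := hg.locallyLipschitzOn.exists_lipschitzOnWith_of_compact
    (isCompact_uIcc.image_of_continuousOn hf.continuousOn)
  exact hf.of_dist_le_mul K fun x hx y hy =>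
    hK.dist_le_mul _ (mem_image_of_mem f hx) _ (mem_image_of_mem f hy)

theorem IntervalIntegrable.absolutelyContinuousOnInterval_primitive {E : Type*}
    [NormedAddCommGroup E] [NormedSpace ℝ E] {f : ℝ → E} {a b c : ℝ}
    (hf : IntervalIntegrable f volume a b) (hc : c ∈ uIcc a b) :
    AbsolutelyContinuousOnInterval (fun x => ∫ t in c..x, f t) a b := by
  refine (hf.norm.absolutelyContinuousOnInterval_intervalIntegral hc).of_dist_le_mul 1
    fun x hx y hy => ?_
  have hI : ∀ z ∈ uIcc a b, IntervalIntegrable f volume c z := fun z hz =>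
    hf.mono_set (uIcc_subset_uIcc hc hz)
  have hIn : ∀ z ∈ uIcc a b, IntervalIntegrable (fun t => ‖f t‖) volume c z := fun z hz =>
    (hI z hz).norm
  rw [one_mul, dist_eq_norm, dist_eq_norm, intervalIntegral.integral_interval_sub_left
    (hI x hx) (hI y hy), intervalIntegral.integral_interval_sub_left (hIn x hx) (hIn y hy),
    Real.norm_eq_abs]
  exact intervalIntegral.norm_integral_le_abs_integral_norm

theorem cexp_intervalIntegral_eq_one_add {u : ℝ → ℂ} {a b x : ℝ}
    (hu : IntervalIntegrable u volume a b) (hx : x ∈ uIcc a b) :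
    cexp (∫ t in a..x, u t) = 1 + ∫ t in a..x, u t * cexp (∫ s in a..t, u s) := by
  set F : ℝ → ℂ := fun x => ∫ t in a..x, u t
  have hF : AbsolutelyContinuousOnInterval F a b :=
    hu.absolutelyContinuousOnInterval_primitive left_mem_uIcc
  have hexpF : AbsolutelyContinuousOnInterval (cexp ∘ F) a b :=
    (contDiff_exp (𝕜 := ℂ) (n := 1)).locallyLipschitz.comp_absolutelyContinuousOnInterval hF
  have huF : IntervalIntegrable (fun t => u t * cexp (F t)) volume a b :=
    hu.mul_continuousOn hexpF.continuousOn
  set D : ℝ → ℂ := cexp ∘ F - fun x => ∫ t in a..x, u t * cexp (F t)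
  have hD : AbsolutelyContinuousOnInterval D a b :=
    hexpF.sub (huF.absolutelyContinuousOnInterval_primitive left_mem_uIcc)
  have hD' : ∀ᵐ y, y ∈ uIcc a b → HasDerivAt D 0 y := by
    filter_upwards [hu.ae_hasDerivAt_integral, huF.ae_hasDerivAt_integral] with y hF' huF' hy
    have h := (hF' hy a left_mem_uIcc).cexp.sub (huF' hy a left_mem_uIcc)
    rwa [mul_comm, sub_self] at h
  obtain ⟨C, hC⟩ := hD.const_of_ae_hasDerivAt_zero hD'
  have h := (hC x hx).trans (hC a left_mem_uIcc).symm
  simp only [D, F, Pi.sub_apply, Function.comp_apply, intervalIntegral.integral_same,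
    Complex.exp_zero, sub_zero] at h
  exact eq_add_of_sub_eq h

theorem continuousOn_of_eq_mul_cexp {u g : ℝ → ℂ} {a b : ℝ}
    (hu : IntervalIntegrable u volume a b)
    (hg : ∀ x ∈ uIcc a b, g x = g a * cexp (∫ t in a..x, u t)) : ContinuousOn g (uIcc a b) :=
  (continuousOn_const.mul (hu.absolutelyContinuousOnInterval_primitive
    left_mem_uIcc).continuousOn.cexp).congr hg

theorem eq_add_integral_of_eq_mul_cexp {u g : ℝ → ℂ} {a b x : ℝ}
    (hu : IntervalIntegrable u volume a b)
    (hg : ∀ x ∈ uIcc a b, g x = g a * cexp (∫ t in a..x, u t)) (hx : x ∈ uIcc a b) :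
    g x = g a + ∫ t in a..x, u t * g t := by
  rw [hg x hx, cexp_intervalIntegral_eq_one_add hu hx, mul_add, mul_one,
    ← intervalIntegral.integral_const_mul]
  congr 1
  refine intervalIntegral.integral_congr fun t ht => ?_
  rw [hg t (uIcc_subset_uIcc left_mem_uIcc hx ht)]
  ring

theorem norm_sq_eq_add_integral_of_eq_mul_cexp {u g : ℝ → ℂ} {a b x : ℝ}
    (hu : IntervalIntegrable u volume a b)
    (hg : ∀ x ∈ uIcc a b, g x = g a * cexp (∫ t in a..x, u t)) (hx : x ∈ uIcc a b) :
    ‖g x‖ ^ 2 = ‖g a‖ ^ 2 + ∫ t in a..x, 2 * (u t).re * ‖g t‖ ^ 2 := by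
  have hre : IntervalIntegrable (fun t => 2 * (u t).re) volume a b :=
    IntervalIntegrable.const_mul ⟨hu.1.re, hu.2.re⟩ 2
  have hnorm : ∀ y ∈ uIcc a b,
      ‖g y‖ ^ 2 = ‖g a‖ ^ 2 * Real.exp (∫ t in a..y, 2 * (u t).re) := by
    intro y hy
    have hre_comm : ∫ t in a..y, (u t).re = (∫ t in a..y, u t).re := by
      simpa using intervalIntegral.intervalIntegral_re
        (hu.mono_set (uIcc_subset_uIcc left_mem_uIcc hy))
    rw [hg y hy, norm_mul, norm_exp, intervalIntegral.integral_const_mul, hre_comm,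
      mul_pow, ← Real.exp_nat_mul]
    norm_num
  have h := eq_add_integral_of_eq_mul_cexp (u := fun t => ((2 * (u t).re : ℝ) : ℂ))
    (g := fun y => ((‖g y‖ ^ 2 : ℝ) : ℂ))
    ⟨hre.1.ofReal, hre.2.ofReal⟩
    (fun y hy => by rw [intervalIntegral.integral_ofReal, ← ofReal_exp,
      ← ofReal_mul, hnorm y hy]) hx
  simp only [← ofReal_mul] at h
  rw [intervalIntegral.integral_ofReal] at h
  exact_mod_cast h

theorem construction_of_extension_with_real_eigenvalue
    (V : ℝ → ℂ)
    (hV : MeasureTheory.MemLp V ⊤ (MeasureTheory.volume.restrict (Set.Ioo 0 (2 * Real.pi))))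
    (lam : ℝ) (g : ℝ → ℂ)
    (hg : ∀ x : ℝ, g x = -2 * Complex.I *
      Complex.exp (-(Complex.I * ∫ t in x..(2 * Real.pi), (starRingEnd ℂ) (V t))
        + Complex.I * lam * ((2 * Real.pi : ℝ) - x)))
    (ρ : ℂ) (hρ : ρ = Complex.I / 2 * g 0)
    (kf : ℝ → ℂ) (hkf : ∀ x : ℝ, kf x = ((V x).im : ℂ) * g x) :
    (g (2 * Real.pi) = -2 * Complex.I ∧ g 0 = ρ * g (2 * Real.pi)) ∧
    (∃ g' : ℝ → ℂ, IsACWithDeriv g g' ∧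
      ∀ᵐ x ∂(MeasureTheory.volume.restrict (Set.Ioo 0 (2 * Real.pi))),
        Complex.I * g' x + V x * g x + g (2 * Real.pi) * kf x = (lam : ℂ) * g x) ∧
    1 - ‖ρ‖ ^ 2
      = (1 / 2) * ∫ t in (0:ℝ)..(2 * Real.pi), (V t).im * ‖g t‖ ^ 2 := by
  have hπ : 0 ≤ 2 * π := by positivity
  set u : ℝ → ℂ := fun t => I * (starRingEnd ℂ) (V t) - I * lam with hu_def
  have hV' : IntervalIntegrable V volume 0 (2 * π) :=
    (intervalIntegrable_iff_integrableOn_Ioo_of_le hπ).mpr (hV.integrable le_top)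
  have hconj : IntervalIntegrable (fun t => (starRingEnd ℂ) (V t)) volume 0 (2 * π) :=
    ⟨Complex.conjCLE.toContinuousLinearMap.integrable_comp hV'.1,
      Complex.conjCLE.toContinuousLinearMap.integrable_comp hV'.2⟩
  have hu : IntervalIntegrable u volume 0 (2 * π) :=
    (hconj.const_mul I).sub intervalIntegrable_const
  have hg_exp : ∀ x ∈ uIcc 0 (2 * π), g x = g 0 * cexp (∫ t in 0..x, u t) := by
    intro x hx
    have hconj_x : IntervalIntegrable (fun t => (starRingEnd ℂ) (V t)) volume 0 x :=
      hconj.mono_set (uIcc_subset_uIcc left_mem_uIcc hx)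
    rw [hg x, hg 0, ← intervalIntegral.integral_interval_sub_left hconj hconj_x,
      mul_assoc _ (cexp _), ← Complex.exp_add, hu_def,
      intervalIntegral.integral_sub (hconj_x.const_mul I) intervalIntegrable_const,
      intervalIntegral.integral_const_mul, intervalIntegral.integral_const, real_smul]
    congr 2
    push_cast
    ring
  have hg2π : g (2 * π) = -2 * I := by simp [hg]
  refine ⟨⟨hg2π, by rw [hρ, hg2π]; linear_combination (g 0) * I_sq⟩,
    ⟨fun t => u t * g t, ⟨?_, fun x hx => ?_⟩, ae_of_all _ fun x => ?_⟩, ?_⟩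
  · exact (intervalIntegrable_iff_integrableOn_Ioc_of_le hπ).mp
      (hu.mul_continuousOn (continuousOn_of_eq_mul_cexp hu hg_exp))
  · exact eq_add_integral_of_eq_mul_cexp hu hg_exp (by rwa [uIcc_of_le hπ])
  · rw [hg2π, hkf]
    have hc := sub_conj (V x)
    push_cast at hc
    linear_combination ((starRingEnd ℂ) (V x) - (lam:ℂ)) * g x * I_sq + g x * hc
  · have h := norm_sq_eq_add_integral_of_eq_mul_cexp hu hg_exp right_mem_uIcc
    have hre : ∀ t, (u t).re = (V t).im := fun t => by simp [hu_def]
    have hg2π_norm : ‖g (2 * π)‖ = 2 := by simp [hg2π]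
    have hρ_norm : ‖ρ‖ = ‖g 0‖ / 2 := by
      rw [hρ, norm_mul, norm_div, norm_I, Complex.norm_two]
      ring
    simp only [hre, hg2π_norm, mul_assoc, intervalIntegral.integral_const_mul] at h
    rw [hρ_norm]
    linear_combination h / 4
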